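/- Let X be a geodesic Peano continuum that is semi-locally simply connected, and let (X̃, d) be the space of homotopy classes rel endpoints of paths from x₀ with the length-infimum metric. Then (X̃, d) is a proper geodesic metric space. -/

import Mathlib

open Metric Set ENNReal NNReal

noncomputable section

/-- Arc length of a path in a pseudo-metric space, valued in `ℝ≥0∞`. -/
def pathLen {X : Type*} [PseudoMetricSpace X] {x y : X} (γ : Path x y) : ℝ≥0∞ :=
  eVariationOn γ Set.univ

/-- A metric space is geodesic if any two points are joined by a path whose
length equals their distance. -/
def IsGeodesicSpace (X : Type*) [MetricSpace X] : Prop :=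
  ∀ x y : X, ∃ γ : Path x y, pathLen γ = ENNReal.ofReal (dist x y)

/-- Semi-local simple connectedness: every point has a neighborhood `U` such
that every loop contained in `U` is null-homotopic in `X`. -/
def SemiLocallySimplyConnected (X : Type*) [TopologicalSpace X] : Prop :=
  ∀ x : X, ∃ U ∈ nhds x, ∀ γ : Path x x, Set.range γ ⊆ U → γ.Homotopic (Path.refl x)

/-- A group is finitely presented. -/
def Group.FinitelyPresented (G : Type*) [Group G] : Prop :=
  ∃ (n : ℕ) (rels : Set (FreeGroup (Fin n))), rels.Finite ∧
    Nonempty (PresentedGroup rels ≃* G)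

/-- The space of homotopy-rel-endpoints classes of paths starting at `x₀`. -/
def PathsFrom {X : Type*} [TopologicalSpace X] (x₀ : X) : Type _ :=
  Σ y : X, Path.Homotopic.Quotient x₀ y

/-- The length-infimum distance on `PathsFrom x₀`, valued in `ℝ≥0∞`:
the infimum of lengths of paths `γ` from `α(1)` to `β(1)` such that
`α ∗ γ` is homotopic rel endpoints to `β`. -/
def dTilde {X : Type*} [MetricSpace X] {x₀ : X} (a b : PathsFrom x₀) : ℝ≥0∞ :=
  ⨅ γ : {γ : Path a.1 b.1 // a.2.trans (Path.Homotopic.Quotient.mk γ) = b.2}, pathLen γ.1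

/-- The endpoint projection `X̃ → X`. -/
def endpointProj {X : Type*} [TopologicalSpace X] {x₀ : X} (a : PathsFrom x₀) : X := a.1

/-- The action of a class of a loop `β` at `x₀` on `PathsFrom x₀`, sending `[α]` to `[β ∗ α]`. -/
def loopAct {X : Type*} [TopologicalSpace X] {x₀ : X}
    (g : Path.Homotopic.Quotient x₀ x₀) (a : PathsFrom x₀) : PathsFrom x₀ :=
  ⟨a.1, g.trans a.2⟩

/-- Uniform path connectedness. -/
def UniformlyPathConnected (X : Type*) [MetricSpace X] : Prop :=
  ∃ α : ℝ → ℝ, ∀ x y : X, x ≠ y →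
    ∃ γ : Path x y, Metric.diam (Set.range γ) ≤ α (dist x y)

/-- `π₁(X, x₀)` is uniformly generated: for some `R > 0` it is generated by
classes of loops of diameter at most `R`, conjugated to the basepoint by arbitrary paths. -/
def UniformlyGeneratedPi1 (X : Type*) [MetricSpace X] (x₀ : X) : Prop :=
  ∃ R : ℝ, 0 < R ∧ Subgroup.closure
    {g : FundamentalGroup X x₀ | ∃ (y : X) (p : Path x₀ y) (γ : Path y y),
      Metric.diam (Set.range γ) ≤ R ∧
      g = FundamentalGroup.fromPath (X := TopCat.of X) (Path.Homotopic.Quotient.mk ((p.trans γ).trans p.symm))} = ⊤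

/-- A list of points of `X` is an `r`-chain: consecutive points are at distance at most `r`. -/
def IsChain' {X : Type*} [MetricSpace X] (r : ℝ) : List X → Prop :=
  List.Chain' (fun x y => dist x y ≤ r)

/-- An elementary move at scale `R` between based chains: insertion of one interior
point, with both chains being `R`-chains. -/
def ChainMove {X : Type*} [MetricSpace X] (R : ℝ) (l₁ l₂ : List X) : Prop :=
  ∃ (p q : List X) (x : X), p ≠ [] ∧ q ≠ [] ∧
    l₁ = p ++ q ∧ l₂ = p ++ x :: q ∧ IsChain' R l₁ ∧ IsChain' R l₂

/-- A based `r`-loop is `R`-null-homotopic: it can be reduced to the trivial loop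
by elementary moves at scale `R`. -/
def ChainNull {X : Type*} [MetricSpace X] (R : ℝ) (x₀ : X) (l : List X) : Prop :=
  Relation.ReflTransGen (fun a b => ChainMove R a b ∨ ChainMove R b a) l [x₀, x₀]

/-- Coarse 1-connectedness of a metric space, via chains (edge-paths in Rips
complexes): `X` is `t`-chain connected for some `t > 0`, and every `r`-loop can
be filled at some uniformly larger scale `R`. -/
def CoarselySimplyConnected (X : Type*) [MetricSpace X] : Prop :=
  (∃ t : ℝ, 0 < t ∧ ∀ x y : X, ∃ l : List X, IsChain' t l ∧
      l.head? = some x ∧ l.getLast? = some y) ∧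
  ∀ r : ℝ, 0 < r → ∃ R : ℝ, r ≤ R ∧ ∀ (x₀ : X) (l : List X),
    IsChain' r l → l.head? = some x₀ → l.getLast? = some x₀ → ChainNull R x₀ l

end

/-!
An almost shortest path between two points of `X̃` can be cut at any prescribed length, so `X̃`
has approximate intermediate points. With compactness of all balls of one fixed radius this
makes every closed ball compact (grow the radius in steps, covering by finitely many small
balls); in a proper space approximate midpoints become exact ones, and repeated bisection then
yields a geodesic.

Small balls of `X̃` are compact: a Lebesgue number argument gives `ε > 0` such that loops in
`ε`-balls of `X` are null-homotopic, so near `[α]` every class is `α` followed by a geodesic of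
`X`, and this lift of a small ball of the compact space `X` is `1`-Lipschitz.
-/

open Filter Topology unitInterval

noncomputable section

namespace Path

variable {Y : Type*} [MetricSpace Y] {x y : Y}

lemma edist_apply_le_pathLen (γ : Path x y) (s t : I) : edist (γ s) (γ t) ≤ pathLen γ :=
  eVariationOn.edist_le _ (mem_univ s) (mem_univ t)

lemma edist_le_pathLen (γ : Path x y) : edist x y ≤ pathLen γ := by
  simpa using γ.edist_apply_le_pathLen 0 1

lemma range_subset_ball_of_pathLen_lt (γ : Path x y) {r : ℝ}
    (h : pathLen γ < ENNReal.ofReal r) : range γ ⊆ ball x r := by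
  rintro _ ⟨t, rfl⟩
  rw [mem_ball', ← edist_lt_ofReal]
  simpa using (γ.edist_apply_le_pathLen 0 t).trans_lt h

lemma pathLen_le_of_lipschitzWith (γ : Path x y) {f : ℝ → Y} {K : ℝ≥0}
    (hf : LipschitzWith K f) (hγ : ∀ t, γ t = f t) : pathLen γ ≤ K := by
  have hval : eVariationOn (Subtype.val : I → ℝ) univ = 1 := by
    rw [← Function.id_comp Subtype.val, eVariationOn.comp_eq_of_monotoneOn id Subtype.val
      (fun _ _ _ _ h => h), image_univ, Subtype.range_coe_subtype, ofPred_mem_eq]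
    simp
  calc pathLen γ = eVariationOn (f ∘ Subtype.val) (univ : Set I) :=
        eVariationOn.eq_of_eqOn fun t _ => hγ t
    _ ≤ K * eVariationOn (Subtype.val : I → ℝ) univ :=
        (hf.lipschitzOnWith (s := univ)).comp_eVariationOn_le (mapsTo_univ _ _)
    _ = K := by rw [hval, mul_one]

lemma eVariationOn_Icc_add_Icc (γ : Path x y) {a b c : I} (hab : a ≤ b) (hbc : b ≤ c) :
    eVariationOn γ (Icc a b) + eVariationOn γ (Icc b c) = eVariationOn γ (Icc a c) := by
  simpa using eVariationOn.Icc_add_Icc (γ : I → Y) (s := univ) hab hbc (mem_univ b)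

lemma eVariationOn_Icc_zero_one (γ : Path x y) : eVariationOn γ (Icc 0 1) = pathLen γ := by
  rw [pathLen, ← Icc_bot_top]
  rfl

lemma continuous_eVariationOn_Icc_zero (γ : Path x y) (hγ : pathLen γ ≠ ⊤) :
    Continuous fun t => eVariationOn γ (Icc 0 t) := by
  refine continuous_iff_continuousAt.mpr fun t => ?_
  have hzero {a b : I} (h : b ≤ a) : eVariationOn γ (Icc a b) = 0 :=
    eVariationOn.subsingleton _ (subsingleton_Icc_of_ge h)
  have hsplit : (fun s => eVariationOn γ (Icc 0 s)) = fun s =>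
      (eVariationOn γ (Icc 0 t) + eVariationOn γ (Icc t s)) - eVariationOn γ (Icc s t) := by
    ext s
    rcases le_total s t with hst | hts
    · rw [hzero hst, add_zero, ← γ.eVariationOn_Icc_add_Icc nonneg' hst,
        ENNReal.add_sub_cancel_right
          (ne_top_of_le_ne_top hγ (eVariationOn.mono _ (subset_univ _)))]
    · rw [hzero hts, tsub_zero, γ.eVariationOn_Icc_add_Icc nonneg' hts]
  have hbv : BoundedVariationOn (γ : I → Y) univ := hγ
  have hright := hbv.tendsto_eVariationOn_Icc_zero_right t γ.continuous.continuousWithinAt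
  have hleft := hbv.tendsto_eVariationOn_Icc_zero_left (x := t) γ.continuous.continuousWithinAt
  simp only [univ_inter, nhdsWithin_univ] at hright hleft
  rw [ContinuousAt, hsplit]
  simpa using ENNReal.Tendsto.sub (tendsto_const_nhds.add hright) hleft (Or.inr zero_ne_top)

lemma exists_eVariationOn_Icc_zero_eq (γ : Path x y) (hγ : pathLen γ ≠ ⊤) {v : ℝ≥0∞}
    (hv : v ≤ pathLen γ) : ∃ t, eVariationOn γ (Icc 0 t) = v := by
  have h₀ : eVariationOn γ (Icc 0 (0 : I)) = 0 := by simp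
  exact intermediate_value_univ 0 1 (γ.continuous_eVariationOn_Icc_zero hγ)
    (by rw [h₀, eVariationOn_Icc_zero_one]; exact ⟨zero_le, hv⟩)

lemma pathLen_subpath (γ : Path x y) {s t : I} (hst : s ≤ t) :
    pathLen (γ.subpath s t) = eVariationOn γ (Icc s t) := by
  have hmono : Monotone (Icc.convexComb s t) := fun u v huv => by
    change (1 - (u : ℝ)) * s + u * t ≤ (1 - (v : ℝ)) * s + v * t
    nlinarith [show (u : ℝ) ≤ v from huv, show (s : ℝ) ≤ t from hst]
  rw [pathLen, subpath, coe_mk', ContinuousMap.coe_mk,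
    eVariationOn.comp_eq_of_monotoneOn _ _ (hmono.monotoneOn _), image_univ,
    range_subpathAux, uIcc_of_le hst]

def initialSegment (γ : Path x y) (t : I) : Path x (γ t) :=
  (γ.subpath 0 t).cast γ.source.symm rfl

def finalSegment (γ : Path x y) (t : I) : Path (γ t) y :=
  (γ.subpath t 1).cast rfl γ.target.symm

lemma pathLen_initialSegment (γ : Path x y) (t : I) :
    pathLen (γ.initialSegment t) = eVariationOn γ (Icc 0 t) :=
  γ.pathLen_subpath nonneg'

lemma pathLen_finalSegment (γ : Path x y) (t : I) :
    pathLen (γ.finalSegment t) = eVariationOn γ (Icc t 1) :=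
  γ.pathLen_subpath le_one'

lemma Homotopic.initialSegment_trans_finalSegment (γ : Path x y) (t : I) :
    ((γ.initialSegment t).trans (γ.finalSegment t)).Homotopic γ := by
  have h := (Homotopy.subpathTransSubpath γ 0 t 1).pathCast γ.source.symm γ.target.symm
  rw [subpath_zero_one] at h
  exact ⟨h⟩

end Path

section LengthSpace

variable {Y : Type*} [MetricSpace Y]

def HasApproxIntermediatePoints (Y : Type*) [MetricSpace Y] : Prop :=
  ∀ (a b : Y) (s δ : ℝ), 0 ≤ s → s ≤ dist a b → 0 < δ →
    ∃ c, dist a c ≤ s ∧ dist c b ≤ dist a b - s + δ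

lemma HasApproxIntermediatePoints.closedBall_add_subset (hY : HasApproxIntermediatePoints Y)
    (a : Y) {r h : ℝ} (hr : 0 ≤ r) (hh : 0 < h) {t : Set Y}
    (ht : closedBall a r ⊆ ⋃ c ∈ t, ball c (h / 2)) :
    closedBall a (r + h) ⊆ ⋃ c ∈ t, closedBall c (2 * h) := by
  intro b hb
  rw [mem_closedBall, dist_comm] at hb
  obtain ⟨c, hac, hcb⟩ := hY a b (min r (dist a b)) (h / 4) (le_min hr dist_nonneg)
    (min_le_right _ _) (by positivity)
  have hcb' : dist c b ≤ h + h / 4 := by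
    rcases min_cases r (dist a b) with ⟨hmin, -⟩ | ⟨hmin, -⟩ <;> rw [hmin] at hcb <;>
      linarith
  obtain ⟨c', hc't, hcc'⟩ := mem_iUnion₂.mp (ht (mem_closedBall.mpr
    ((dist_comm c a).trans_le (hac.trans (min_le_left _ _)))))
  refine mem_biUnion hc't (mem_closedBall.mpr ?_)
  linarith [dist_triangle b c c', dist_comm b c, mem_ball.mp hcc']

theorem HasApproxIntermediatePoints.properSpace (hY : HasApproxIntermediatePoints Y)
    {r : ℝ} (hr : 0 < r) (hcomp : ∀ a : Y, IsCompact (closedBall a r)) : ProperSpace Y := by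
  have hn (n : ℕ) : ∀ a : Y, IsCompact (closedBall a (n * (r / 2))) := by
    induction n with
    | zero => simp
    | succ n ih =>
      intro a
      obtain ⟨t, -, htfin, htcover⟩ := (ih a).elim_finite_subcover_image
        (b := closedBall a (n * (r / 2))) (c := fun c => ball c (r / 2 / 2))
        (fun _ _ => isOpen_ball) fun c hc => mem_biUnion hc (mem_ball_self (by positivity))
      have hsub := hY.closedBall_add_subset a (by positivity) (by positivity) htcover
      rw [mul_div_cancel₀ _ two_ne_zero, ← add_one_mul] at hsub
      exact (htfin.isCompact_biUnion fun c _ => hcomp c).of_isClosed_subset isClosed_closedBall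
        (by exact_mod_cast hsub)
  refine ⟨fun a r' => ?_⟩
  obtain ⟨n, hn'⟩ := exists_nat_ge (r' / (r / 2))
  exact (hn n a).of_isClosed_subset isClosed_closedBall
    (closedBall_subset_closedBall ((div_le_iff₀ (by positivity)).mp hn'))

lemma HasApproxIntermediatePoints.exists_midpoint [ProperSpace Y]
    (hY : HasApproxIntermediatePoints Y) (a b : Y) :
    ∃ c, dist a c ≤ dist a b / 2 ∧ dist c b ≤ dist a b / 2 := by
  obtain ⟨c, hc, hmin⟩ := (isCompact_closedBall a (dist a b / 2)).exists_isMinOn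
    ⟨a, mem_closedBall_self (by positivity)⟩
    (continuous_id.dist continuous_const : Continuous (dist · b)).continuousOn
  refine ⟨c, (dist_comm a c).trans_le hc, le_of_forall_pos_lt_add fun δ hδ => ?_⟩
  obtain ⟨c', hac', hc'b⟩ := hY a b (dist a b / 2) (δ / 2) (by positivity)
    (by linarith [dist_nonneg (x := a) (y := b)]) (by positivity)
  have : dist c b ≤ dist c' b := hmin (mem_closedBall.mpr ((dist_comm c' a).trans_le hac'))
  linarith

end LengthSpace

section Bisection

variable {Y : Type*} [MetricSpace Y]

/-- The step function through the `2 ^ n + 1` points obtained from `a` and `b` by `n` rounds of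
bisection with `mid`. -/
def dyadicApprox (mid : Y → Y → Y) : ℕ → Y → Y → ℝ → Y
  | 0, a, b, t => if t < 1 then a else b
  | n + 1, a, b, t =>
    if t ≤ 1 / 2 then dyadicApprox mid n a (mid a b) (2 * t)
    else dyadicApprox mid n (mid a b) b (2 * t - 1)

variable {mid : Y → Y → Y}

omit [MetricSpace Y] in
lemma dyadicApprox_zero (n : ℕ) (a b : Y) : dyadicApprox mid n a b 0 = a := by
  induction n generalizing a b with
  | zero => simp [dyadicApprox]
  | succ n ih => simp [dyadicApprox, ih]

omit [MetricSpace Y] in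
lemma dyadicApprox_one (n : ℕ) (a b : Y) : dyadicApprox mid n a b 1 = b := by
  induction n generalizing a b with
  | zero => simp [dyadicApprox]
  | succ n ih => norm_num [dyadicApprox, ih]

variable (hmid : ∀ a b, dist a (mid a b) ≤ dist a b / 2 ∧ dist (mid a b) b ≤ dist a b / 2)
include hmid

/- The absence of an error term here keeps the error in `dist_dyadicApprox_le` from doubling
when `s` and `t` lie in different halves. -/
lemma dist_left_dyadicApprox_le (n : ℕ) (a b : Y) {t : ℝ} (ht : 0 ≤ t) :
    dist a (dyadicApprox mid n a b t) ≤ dist a b * t := by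
  induction n generalizing a b t with
  | zero =>
    simp only [dyadicApprox]
    split_ifs
    · simp only [dist_self]; positivity
    · nlinarith [dist_nonneg (x := a) (y := b)]
  | succ n ih =>
    obtain ⟨h₁, h₂⟩ := hmid a b
    simp only [dyadicApprox]
    split_ifs
    · nlinarith [ih a (mid a b) (by linarith : 0 ≤ 2 * t)]
    · nlinarith [ih (mid a b) b (by linarith : 0 ≤ 2 * t - 1),
        dist_triangle a (mid a b) (dyadicApprox mid n (mid a b) b (2 * t - 1))]

lemma dist_dyadicApprox_right_le (n : ℕ) (a b : Y) {s : ℝ} (hs : s ≤ 1) :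
    dist (dyadicApprox mid n a b s) b ≤ dist a b * (1 - s) + dist a b / 2 ^ n := by
  induction n generalizing a b s with
  | zero =>
    simp only [dyadicApprox]
    split_ifs
    · nlinarith [dist_nonneg (x := a) (y := b)]
    · simp only [dist_self]; nlinarith [dist_nonneg (x := a) (y := b)]
  | succ n ih =>
    obtain ⟨h₁, h₂⟩ := hmid a b
    have hpow : dist a b / 2 ^ (n + 1) = dist a b / 2 / 2 ^ n := by ring
    simp only [dyadicApprox, hpow]
    split_ifs
    · have := ih a (mid a b) (by linarith : 2 * s ≤ 1)
      have := dist_triangle (dyadicApprox mid n a (mid a b) (2 * s)) (mid a b) b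
      have : dist a (mid a b) / 2 ^ n ≤ dist a b / 2 / 2 ^ n := by gcongr
      nlinarith
    · have := ih (mid a b) b (by linarith : 2 * s - 1 ≤ 1)
      have : dist (mid a b) b / 2 ^ n ≤ dist a b / 2 / 2 ^ n := by gcongr
      nlinarith

lemma dist_dyadicApprox_le (n : ℕ) (a b : Y) {s t : ℝ} (hst : s ≤ t) :
    dist (dyadicApprox mid n a b s) (dyadicApprox mid n a b t) ≤
      dist a b * (t - s) + dist a b / 2 ^ n := by
  induction n generalizing a b s t with
  | zero =>
    have : dist (dyadicApprox mid 0 a b s) (dyadicApprox mid 0 a b t) ≤ dist a b := by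
      simp only [dyadicApprox]; split_ifs <;> simp [dist_comm]
    nlinarith [dist_nonneg (x := a) (y := b)]
  | succ n ih =>
    obtain ⟨h₁, h₂⟩ := hmid a b
    have hpow : dist a b / 2 ^ (n + 1) = dist a b / 2 / 2 ^ n := by ring
    simp only [dyadicApprox, hpow]
    split_ifs
    · have := ih a (mid a b) (by linarith : 2 * s ≤ 2 * t)
      have : dist a (mid a b) / 2 ^ n ≤ dist a b / 2 / 2 ^ n := by gcongr
      nlinarith
    · have := dist_dyadicApprox_right_le hmid n a (mid a b) (by linarith : 2 * s ≤ 1)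
      have := dist_left_dyadicApprox_le hmid n (mid a b) b (by linarith : 0 ≤ 2 * t - 1)
      have := dist_triangle (dyadicApprox mid n a (mid a b) (2 * s)) (mid a b)
        (dyadicApprox mid n (mid a b) b (2 * t - 1))
      have : dist a (mid a b) / 2 ^ n ≤ dist a b / 2 / 2 ^ n := by gcongr
      nlinarith
    · linarith
    · have := ih (mid a b) b (by linarith : 2 * s - 1 ≤ 2 * t - 1)
      have : dist (mid a b) b / 2 ^ n ≤ dist a b / 2 / 2 ^ n := by gcongr
      nlinarith

lemma dist_dyadicApprox_succ_le (n : ℕ) (a b : Y) (t : ℝ) :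
    dist (dyadicApprox mid n a b t) (dyadicApprox mid (n + 1) a b t) ≤
      dist a b / 2 / 2 ^ n := by
  induction n generalizing a b t with
  | zero =>
    obtain ⟨h₁, h₂⟩ := hmid a b
    simp only [dyadicApprox]
    split_ifs <;> first | (simp only [dist_self]; positivity) | linarith
  | succ n ih =>
    have hpow : dist a b / 2 / 2 ^ (n + 1) = dist a b / 2 / 2 / 2 ^ n := by ring
    rw [dyadicApprox.eq_2 (n := n), dyadicApprox.eq_2 (n := n + 1), hpow]
    split_ifs
    · exact (ih a (mid a b) (2 * t)).trans (by gcongr; exact (hmid a b).1)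
    · exact (ih (mid a b) b (2 * t - 1)).trans (by gcongr; exact (hmid a b).2)

end Bisection

theorem isGeodesicSpace_of_exists_midpoint {Y : Type*} [MetricSpace Y] [CompleteSpace Y]
    (h : ∀ a b : Y, ∃ c, dist a c ≤ dist a b / 2 ∧ dist c b ≤ dist a b / 2) :
    IsGeodesicSpace Y := by
  choose mid hmid using h
  intro a b
  obtain ⟨f, hf⟩ : ∃ f : ℝ → Y, ∀ t,
      Tendsto (fun n => dyadicApprox mid n a b t) atTop (𝓝 (f t)) :=
    ⟨_, fun t => (cauchySeq_of_le_geometric_two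
      (dist_dyadicApprox_succ_le hmid · a b t)).tendsto_limUnder⟩
  have hdist (s t : ℝ) (hst : s ≤ t) : dist (f s) (f t) ≤ dist a b * (t - s) :=
    le_of_tendsto_of_tendsto' ((hf s).dist (hf t))
      (by simpa using tendsto_const_nhds.add ((tendsto_pow_atTop_nhds_zero_of_lt_one
        (by norm_num) (by norm_num : (1 / 2 : ℝ) < 1)).const_mul (dist a b)))
      fun n => (dist_dyadicApprox_le hmid n a b hst).trans_eq (by ring)
  have hf_lip : LipschitzWith (Real.toNNReal (dist a b)) f := by
    refine LipschitzWith.of_dist_le_mul fun s t => ?_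
    rw [Real.coe_toNNReal _ dist_nonneg, Real.dist_eq]
    rcases le_total s t with hst | hst
    · simpa [abs_of_nonpos (sub_nonpos.mpr hst)] using hdist s t hst
    · simpa [dist_comm, abs_of_nonneg (sub_nonneg.mpr hst)] using hdist t s hst
  have hf_eq (t : ℝ) (c : Y) (hc : ∀ n, dyadicApprox mid n a b t = c) : f t = c :=
    tendsto_nhds_unique (hf t) (by simp [hc])
  let γ : Path a b :=
    { toFun := fun t => f t
      continuous_toFun := hf_lip.continuous.comp continuous_subtype_val
      source' := hf_eq 0 a fun n => dyadicApprox_zero n a b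
      target' := hf_eq 1 b fun n => dyadicApprox_one n a b }
  refine ⟨γ, le_antisymm ?_ ?_⟩
  · exact (γ.pathLen_le_of_lipschitzWith hf_lip fun _ => rfl).trans_eq rfl
  · rw [← edist_dist]
    exact γ.edist_le_pathLen

section SmallLoops

variable {X : Type*} [MetricSpace X]

lemma Path.Homotopic.refl_of_trans_trans_symm {x y : X} (g : Path x y) (δ : Path y y)
    (h : ((g.trans δ).trans g.symm).Homotopic (Path.refl x)) : δ.Homotopic (Path.refl y) := by
  rw [← Quotient.eq] at h ⊢
  simp only [Quotient.mk_trans, Quotient.mk_symm, Quotient.mk_refl] at h ⊢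
  set G := Quotient.mk g
  calc Quotient.mk δ = (G.symm.trans G).trans ((Quotient.mk δ).trans (G.symm.trans G)) := by simp
    _ = G.symm.trans (((G.trans (Quotient.mk δ)).trans G.symm).trans G) := by
      simp only [Quotient.trans_assoc]
    _ = Quotient.refl y := by simp [h]

def SmallLoopsNullHomotopic (X : Type*) [MetricSpace X] (ε : ℝ) : Prop :=
  ∀ (y : X) (δ : Path y y), range δ ⊆ ball y ε → δ.Homotopic (Path.refl y)

lemma SemiLocallySimplyConnected.exists_smallLoopsNullHomotopic [CompactSpace X]
    (hs : SemiLocallySimplyConnected X) (hg : IsGeodesicSpace X) :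
    ∃ ε > 0, SmallLoopsNullHomotopic X ε := by
  have hball (x : X) :
      ∃ r > 0, ∀ δ : Path x x, range δ ⊆ ball x r → δ.Homotopic (Path.refl x) := by
    obtain ⟨U, hU, hnull⟩ := hs x
    obtain ⟨r, hr, hrU⟩ := Metric.mem_nhds_iff.mp hU
    exact ⟨r, hr, fun δ hδ => hnull δ (hδ.trans hrU)⟩
  choose r hr hnull using hball
  obtain ⟨ε, hε, hleb⟩ := lebesgue_number_lemma_of_metric isCompact_univ
    (fun x => isOpen_ball) (fun y _ => mem_iUnion.mpr ⟨y, mem_ball_self (hr y)⟩)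
  refine ⟨ε, hε, fun y δ hδ => ?_⟩
  obtain ⟨i, hi⟩ := hleb y (mem_univ y)
  -- Conjugating by a geodesic from `i` to `y` moves the loop to `i` without leaving `ball i (r i)`.
  obtain ⟨g, hg⟩ := hg i y
  have hg_range : range g ⊆ ball i (r i) := g.range_subset_ball_of_pathLen_lt <|
    hg.trans_lt ((ENNReal.ofReal_lt_ofReal_iff (hr i)).mpr (mem_ball'.mp (hi (mem_ball_self hε))))
  refine Path.Homotopic.refl_of_trans_trans_symm g δ (hnull i _ ?_)
  rw [Path.trans_range, Path.trans_range, Path.symm_range]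
  exact union_subset (union_subset hg_range (hδ.trans hi)) hg_range

open Path.Homotopic.Quotient in
lemma SmallLoopsNullHomotopic.homotopic {ε : ℝ} (hε : SmallLoopsNullHomotopic X ε) {y z : X}
    (γ γ' : Path y z) (h : range γ ⊆ ball y ε) (h' : range γ' ⊆ ball y ε) :
    γ.Homotopic γ' := by
  have hloop := hε y (γ.trans γ'.symm)
    (by rw [Path.trans_range, Path.symm_range]; exact union_subset h h')
  rw [← eq] at hloop ⊢
  simp only [mk_trans, mk_symm, mk_refl] at hloop
  calc mk γ = ((mk γ).trans (mk γ').symm).trans (mk γ') := by simp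
    _ = mk γ' := by simp [hloop]

end SmallLoops

section PathsFrom

variable {X : Type*} [MetricSpace X] {x₀ : X}

open Path.Homotopic.Quotient

lemma dTilde_le_pathLen {a b : PathsFrom x₀} (γ : Path a.1 b.1)
    (hγ : a.2.trans (mk γ) = b.2) : dTilde a b ≤ pathLen γ :=
  iInf_le (fun γ : {γ : Path a.1 b.1 // a.2.trans (mk γ) = b.2} => pathLen γ.1) ⟨γ, hγ⟩

lemma exists_pathLen_lt_of_dTilde_lt {a b : PathsFrom x₀} {C : ℝ≥0∞} (h : dTilde a b < C) :
    ∃ γ : Path a.1 b.1, a.2.trans (mk γ) = b.2 ∧ pathLen γ < C := by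
  obtain ⟨⟨γ, hγ⟩, hlt⟩ := iInf_lt_iff.mp h
  exact ⟨γ, hγ, hlt⟩

lemma edist_le_dTilde (a b : PathsFrom x₀) : edist a.1 b.1 ≤ dTilde a b :=
  le_iInf fun γ => γ.1.edist_le_pathLen

def IsGeodesicSpace.geodesic (hg : IsGeodesicSpace X) (x y : X) : Path x y := (hg x y).choose

lemma IsGeodesicSpace.pathLen_geodesic (hg : IsGeodesicSpace X) (x y : X) :
    pathLen (hg.geodesic x y) = ENNReal.ofReal (dist x y) :=
  (hg x y).choose_spec

lemma IsGeodesicSpace.range_geodesic_subset_ball (hg : IsGeodesicSpace X) {x y : X} {r : ℝ}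
    (h : dist x y < r) : range (hg.geodesic x y) ⊆ ball x r :=
  Path.range_subset_ball_of_pathLen_lt _ <| by
    rw [hg.pathLen_geodesic]
    exact ENNReal.ofReal_lt_ofReal_iff'.mpr ⟨h, dist_nonneg.trans_lt h⟩

def geodesicLift (hg : IsGeodesicSpace X) (a : PathsFrom x₀) (z : X) : PathsFrom x₀ :=
  ⟨z, a.2.trans (mk (hg.geodesic a.1 z))⟩

variable [MetricSpace (PathsFrom x₀)] (hd : ∀ a b : PathsFrom x₀, edist a b = dTilde a b)
include hd

lemma hasApproxIntermediatePoints_pathsFrom : HasApproxIntermediatePoints (PathsFrom x₀) := by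
  intro a b s δ hs hsd hδ
  obtain ⟨γ, hγ, hlen⟩ := exists_pathLen_lt_of_dTilde_lt (C := ENNReal.ofReal (dist a b + δ))
    (by rw [← hd, edist_lt_ofReal]; linarith)
  have hsγ : ENNReal.ofReal s ≤ pathLen γ :=
    calc ENNReal.ofReal s ≤ edist a b := by rw [edist_dist]; exact ENNReal.ofReal_le_ofReal hsd
      _ ≤ pathLen γ := (hd a b).trans_le (dTilde_le_pathLen γ hγ)
  obtain ⟨t, ht⟩ := γ.exists_eVariationOn_Icc_zero_eq hlen.ne_top hsγ
  let c : PathsFrom x₀ := ⟨γ t, a.2.trans (mk (γ.initialSegment t))⟩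
  have hcb : c.2.trans (mk (γ.finalSegment t)) = b.2 := by
    rw [← hγ, trans_assoc, ← mk_trans,
      eq.mpr (Path.Homotopic.initialSegment_trans_finalSegment γ t)]
  have hrest : eVariationOn γ (Icc t 1) + ENNReal.ofReal s <
      ENNReal.ofReal (dist a b - s + δ) + ENNReal.ofReal s := by
    rw [← ENNReal.ofReal_add (by linarith) hs, ← ht, add_comm,
      γ.eVariationOn_Icc_add_Icc nonneg' le_one', γ.eVariationOn_Icc_zero_one]
    convert hlen using 2
    ring
  refine ⟨c, ?_, ?_⟩
  · rw [← edist_le_ofReal hs, hd, ← ht, ← γ.pathLen_initialSegment]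
    exact dTilde_le_pathLen _ rfl
  · rw [← edist_le_ofReal (by linarith), hd]
    refine (dTilde_le_pathLen _ hcb).trans ?_
    rw [γ.pathLen_finalSegment]
    exact ((ENNReal.add_lt_add_iff_right ofReal_ne_top).mp hrest).le

variable (hg : IsGeodesicSpace X) {ε : ℝ} (hε : SmallLoopsNullHomotopic X ε)
include hg hε

lemma closedBall_subset_image_geodesicLift (a : PathsFrom x₀) {r : ℝ} (hr : r < ε) :
    closedBall a r ⊆ geodesicLift hg a '' closedBall a.1 r := by
  intro b hb
  have hab : dist a b ≤ r := mem_closedBall'.mp hb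
  have hr₀ : 0 ≤ r := dist_nonneg.trans hab
  have hdt : dTilde a b ≤ ENNReal.ofReal r := hd a b ▸ (edist_le_ofReal hr₀).mpr hab
  obtain ⟨γ, hγ, hlen⟩ := exists_pathLen_lt_of_dTilde_lt (C := ENNReal.ofReal ε)
    (hdt.trans_lt (ENNReal.ofReal_lt_ofReal_iff'.mpr ⟨hr, hr₀.trans_lt hr⟩))
  have hab₁ : dist a.1 b.1 ≤ r := (edist_le_ofReal hr₀).mp ((edist_le_dTilde a b).trans hdt)
  refine ⟨b.1, mem_closedBall'.mpr hab₁, ?_⟩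
  have hhom : (hg.geodesic a.1 b.1).Homotopic γ := hε.homotopic _ _
    (hg.range_geodesic_subset_ball (hab₁.trans_lt hr)) (γ.range_subset_ball_of_pathLen_lt hlen)
  change (⟨b.1, a.2.trans (mk (hg.geodesic a.1 b.1))⟩ : PathsFrom x₀) = ⟨b.1, b.2⟩
  rw [eq.mpr hhom, hγ]

lemma dist_geodesicLift_le (a : PathsFrom x₀) {z z' : X} (h : dist a.1 z + dist z z' < ε)
    (h' : dist a.1 z' < ε) :
    dist (geodesicLift hg a z) (geodesicLift hg a z') ≤ dist z z' := by
  have hhom : ((hg.geodesic a.1 z).trans (hg.geodesic z z')).Homotopic (hg.geodesic a.1 z') := by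
    refine hε.homotopic _ _ ?_ (hg.range_geodesic_subset_ball h')
    rw [Path.trans_range]
    exact union_subset
      (hg.range_geodesic_subset_ball (by linarith [dist_nonneg (x := z) (y := z')]))
      ((hg.range_geodesic_subset_ball (r := ε - dist a.1 z) (by linarith)).trans
        (ball_subset_ball' (by rw [dist_comm]; linarith)))
  rw [← edist_le_ofReal dist_nonneg, hd, ← hg.pathLen_geodesic z z']
  refine dTilde_le_pathLen _ ?_
  simp only [geodesicLift]
  rw [trans_assoc, ← mk_trans, eq.mpr hhom]

lemma isCompact_closedBall_pathsFrom [CompactSpace X] (a : PathsFrom x₀) {r : ℝ}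
    (hr₀ : 0 ≤ r) (hr : 3 * r < ε) : IsCompact (closedBall a r) := by
  have hlip : LipschitzOnWith 1 (geodesicLift hg a) (closedBall a.1 r) := by
    refine LipschitzOnWith.of_dist_le_mul fun z hz z' hz' => ?_
    rw [mem_closedBall'] at hz hz'
    rw [NNReal.coe_one, one_mul]
    refine dist_geodesicLift_le hd hg hε a ?_ (by linarith [dist_nonneg (x := a.1) (y := z)])
    linarith [dist_triangle_left z z' a.1]
  exact ((isCompact_closedBall a.1 r).image_of_continuousOn hlip.continuousOn).of_isClosed_subset
    isClosed_closedBall (closedBall_subset_image_geodesicLift hd hg hε a (by linarith))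

end PathsFrom

end

theorem stmt5_general {X : Type*} [MetricSpace X] [CompactSpace X] (hg : IsGeodesicSpace X)
    (hs : SemiLocallySimplyConnected X) (x₀ : X)
    (m : MetricSpace (PathsFrom x₀))
    (hm : ∀ a b : PathsFrom x₀,
      ENNReal.ofReal (letI := m; dist a b) = dTilde a b) :
    letI := m
    ProperSpace (PathsFrom x₀) ∧ IsGeodesicSpace (PathsFrom x₀) := by
  let := m
  obtain ⟨ε, hε, hsmall⟩ := hs.exists_smallLoopsNullHomotopic hg
  have hd (a b : PathsFrom x₀) : edist a b = dTilde a b := (edist_dist a b).trans (hm a b)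
  have hY := hasApproxIntermediatePoints_pathsFrom hd
  have : ProperSpace (PathsFrom x₀) := hY.properSpace (r := ε / 4) (by positivity)
    fun a => isCompact_closedBall_pathsFrom hd hg hsmall a (by positivity) (by linarith)
  exact ⟨this, isGeodesicSpace_of_exists_midpoint hY.exists_midpoint⟩

/-- `(X̃, d)` is a proper geodesic metric space. -/
theorem stmt5 {X : Type*} [MetricSpace X] [CompactSpace X] [ConnectedSpace X]
    [LocallyConnectedSpace X] (hg : IsGeodesicSpace X)
    (hs : SemiLocallySimplyConnected X) (x₀ : X)
    (m : MetricSpace (PathsFrom x₀))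
    (hm : ∀ a b : PathsFrom x₀,
      ENNReal.ofReal (letI := m; dist a b) = dTilde a b) :
    letI := m
    ProperSpace (PathsFrom x₀) ∧ IsGeodesicSpace (PathsFrom x₀) :=
  stmt5_general hg hs x₀ m hm
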